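/- arXiv:1211.7259 — 2 statements merged into one kernel-verified Lean document; each statement's English description precedes it below -/
import Mathlib

section
/- Define W(x) = [ 9·(1 + √(1 − 4x/27))^{4/3} − 2^{4/3}·x^{2/3} ] / ( 2^{5/3}·3^{3/2}·π·x^{1/3}·(1 + √(1 − 4x/27))^{2/3} ) for x ∈ (0, 27/4). Then W(x) ≥ 0 on (0, 27/4) and for every natural number m, ∫₀^{27/4} x^m · W(x) dx = A_m(3, 2) = 2·binom(3m+2, m) / (3m+2). -/
/-!
Substitute `x = 27u(1-u)` with `u ∈ (0, 1/2)`: then `√(1 - 4x/27) = 1 - 2u`, and with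
`A = u^(1/3)`, `B = (1-u)^(1/3)` the density becomes `(B² - A²) / (2√3 π A B)` while
`dx = 27 (B³ - A³) du`. So `x^m W(x) dx` turns into `f(u) + f(1-u)` (up to a constant) for a
difference `f` of two Beta integrands, and folding `(0, 1/2)` onto `(0, 1)` by `u ↦ 1 - u` leaves
`B(m+2/3, m+7/3) - B(m+5/3, m+4/3) = (2/3) Γ(m+2/3) Γ(m+4/3) / (2m+2)!`. The reflection formula
gives `Γ(2/3) Γ(4/3) = 2√3π/9`, and the recursion of `Γ` turns the result into
`2 (3m+1)! / (m! (2m+2)!)`, which is also the closed form of `A_m(3,2)`.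
-/

open Real

/-- The Raney numbers (two-parameter Fuss–Catalan numbers):
`A 0 (p,r) = 1` and `A m (p,r) = (r/m!)·∏_{i=1}^{m−1} (m·p + r − i)` for `m ≥ 1`. -/
noncomputable def raney (p r : ℝ) : ℕ → ℝ
  | 0 => 1
  | (m + 1) => (r / (Nat.factorial (m + 1) : ℝ)) *
      ∏ i ∈ Finset.Icc 1 m, (((m : ℝ) + 1) * p + r - (i : ℝ))

open MeasureTheory Set
open scoped Nat

theorem prod_Icc_natCast_add_one_sub (n m : ℕ) :
    ∏ i ∈ Finset.Icc 1 m, ((n : ℝ) + 1 - i) = n.descFactorial m := by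
  induction m with
  | zero => simp
  | succ m ih =>
    rw [Finset.prod_Icc_succ_top (by omega), ih, Nat.descFactorial_succ]
    rcases le_or_gt m n with h | h
    · push_cast [h]; ring
    · simp [Nat.descFactorial_of_lt h]

theorem raney_natCast_succ (p r m : ℕ) (hr : 0 < r) :
    raney p r (m + 1) = r * ((m + 1) * p + r - 1).descFactorial m / (m + 1)! := by
  have hN : ((((m + 1) * p + r - 1 : ℕ) : ℝ) + 1) = ((m : ℝ) + 1) * p + r := by
    rw [Nat.cast_sub (by nlinarith)]; push_cast; ring
  rw [raney, ← prod_Icc_natCast_add_one_sub, hN]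
  ring

theorem raney_three_two (m : ℕ) : raney 3 2 m = 2 * (3 * m + 1)! / (m ! * (2 * m + 2)!) := by
  cases m with
  | zero => norm_num [raney]
  | succ m =>
    have h := Nat.factorial_mul_descFactorial (show m ≤ 3 * m + 4 by omega)
    rw [show 3 * m + 4 - m = 2 * m + 4 by omega] at h
    have hr := raney_natCast_succ 3 2 m two_pos
    simp only [Nat.cast_ofNat] at hr
    rw [hr, show (m + 1) * 3 + 2 - 1 = 3 * m + 4 by omega,
      show 3 * (m + 1) + 1 = 3 * m + 4 by omega,
      show 2 * (m + 1) + 2 = 2 * m + 4 by omega, ← h]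
    push_cast
    field_simp

theorem two_mul_factorial_div_eq_choose (m : ℕ) :
    2 * ((3 * m + 1)! : ℝ) / (m ! * (2 * m + 2)!) =
      2 * (Nat.choose (3 * m + 2) m) / (3 * m + 2) := by
  have h := Nat.choose_mul_factorial_mul_factorial (show m ≤ 3 * m + 2 by omega)
  rw [show 3 * m + 2 - m = 2 * m + 2 by omega, Nat.factorial_succ (3 * m + 1)] at h
  have hR : (Nat.choose (3 * m + 2) m : ℝ) * m ! * (2 * m + 2)! = (3 * m + 2) * (3 * m + 1)! :=
    mod_cast h
  field_simp
  linear_combination -hR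

theorem Gamma_two_thirds_mul_Gamma_four_thirds :
    Gamma (2 / 3) * Gamma (4 / 3) = 2 * √3 * π / 9 := by
  have h := Gamma_mul_Gamma_one_sub (1 / 3)
  rw [show (1 : ℝ) - 1 / 3 = 2 / 3 by norm_num, show π * (1 / 3) = π / 3 by ring,
    sin_pi_div_three] at h
  rw [show (4 : ℝ) / 3 = 1 / 3 + 1 by norm_num, Gamma_add_one (by norm_num)]
  have h3 : √3 ^ 2 = 3 := sq_sqrt (by norm_num)
  field_simp at h ⊢
  linear_combination 3 * √3 * h - 3 * Gamma (1 / 3) * Gamma (2 / 3) * h3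

theorem Gamma_natCast_add_two_thirds_mul_Gamma_natCast_add_four_thirds (m : ℕ) :
    Gamma (m + 2 / 3) * Gamma (m + 4 / 3) =
      2 * √3 * π * (3 * m + 1)! / (9 * 27 ^ m * m !) := by
  induction m with
  | zero => simpa using Gamma_two_thirds_mul_Gamma_four_thirds
  | succ m ih =>
    push_cast
    rw [show (m : ℝ) + 1 + 2 / 3 = m + 2 / 3 + 1 by ring,
      show (m : ℝ) + 1 + 4 / 3 = m + 4 / 3 + 1 by ring, Gamma_add_one (by positivity),
      Gamma_add_one (by positivity), mul_mul_mul_comm, ih,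
      show 3 * (m + 1) + 1 = 3 * m + 1 + 1 + 1 + 1 by ring]
    push_cast [Nat.factorial_succ]
    field_simp
    ring

theorem ofReal_rpow_mul_one_sub_rpow (a b : ℝ) {x : ℝ} (hx : x ∈ Icc (0 : ℝ) 1) :
    ((x ^ (a - 1) * (1 - x) ^ (b - 1) : ℝ) : ℂ) =
      (x : ℂ) ^ ((a : ℂ) - 1) * (1 - (x : ℂ)) ^ ((b : ℂ) - 1) := by
  rw [Complex.ofReal_mul, Complex.ofReal_cpow hx.1, Complex.ofReal_cpow (by linarith [hx.2])]
  push_cast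
  ring

theorem intervalIntegrable_rpow_mul_one_sub_rpow {a b : ℝ} (ha : 0 < a) (hb : 0 < b) :
    IntervalIntegrable (fun x : ℝ => x ^ (a - 1) * (1 - x) ^ (b - 1)) volume 0 1 := by
  have hc := Complex.betaIntegral_convergent (u := a) (v := b) (by simpa) (by simpa)
  rw [intervalIntegrable_iff_integrableOn_Ioc_of_le zero_le_one] at hc ⊢
  refine IntegrableOn.congr_fun hc.re (fun x hx => ?_) measurableSet_Ioc
  rw [← ofReal_rpow_mul_one_sub_rpow a b (Ioc_subset_Icc_self hx)]
  exact RCLike.ofReal_re _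

theorem integral_rpow_mul_one_sub_rpow {a b : ℝ} (ha : 0 < a) (hb : 0 < b) :
    ∫ x in (0 : ℝ)..1, x ^ (a - 1) * (1 - x) ^ (b - 1) = Gamma a * Gamma b / Gamma (a + b) := by
  have key := Complex.Gamma_mul_Gamma_eq_betaIntegral (s := a) (t := b) (by simpa) (by simpa)
  rw [Complex.betaIntegral, intervalIntegral.integral_congr
      (fun x hx => (ofReal_rpow_mul_one_sub_rpow a b (uIcc_of_le (zero_le_one' ℝ) ▸ hx)).symm),
    intervalIntegral.integral_ofReal, ← Complex.ofReal_add, Complex.Gamma_ofReal,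
    Complex.Gamma_ofReal, Complex.Gamma_ofReal] at key
  rw [eq_div_iff (Gamma_pos_of_pos (add_pos ha hb)).ne', mul_comm]
  exact_mod_cast key.symm

theorem intervalIntegrable_rpow_mul_one_sub_rpow_sub {a b : ℝ} (ha : 0 < a) (hb : 0 < b) :
    IntervalIntegrable (fun x : ℝ => x ^ (a - 1) * (1 - x) ^ b - x ^ a * (1 - x) ^ (b - 1))
      volume 0 1 := by
  have h₁ := intervalIntegrable_rpow_mul_one_sub_rpow ha (add_pos hb one_pos)
  have h₂ := intervalIntegrable_rpow_mul_one_sub_rpow (add_pos ha one_pos) hb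
  simp only [add_sub_cancel_right] at h₁ h₂
  exact h₁.sub h₂

theorem integral_rpow_mul_one_sub_rpow_sub {a b : ℝ} (ha : 0 < a) (hb : 0 < b) :
    ∫ x in (0 : ℝ)..1, (x ^ (a - 1) * (1 - x) ^ b - x ^ a * (1 - x) ^ (b - 1)) =
      (b - a) * Gamma a * Gamma b / Gamma (a + b + 1) := by
  have h₁ := integral_rpow_mul_one_sub_rpow ha (add_pos hb one_pos)
  have h₂ := integral_rpow_mul_one_sub_rpow (add_pos ha one_pos) hb
  have i₁ := intervalIntegrable_rpow_mul_one_sub_rpow ha (add_pos hb one_pos)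
  have i₂ := intervalIntegrable_rpow_mul_one_sub_rpow (add_pos ha one_pos) hb
  simp only [add_sub_cancel_right] at h₁ h₂ i₁ i₂
  rw [intervalIntegral.integral_sub i₁ i₂, h₁, h₂, Gamma_add_one ha.ne', Gamma_add_one hb.ne',
    show a + (b + 1) = a + b + 1 by ring, show a + 1 + b = a + b + 1 by ring]
  ring

theorem intervalIntegral.integral_add_comp_one_sub_half {f : ℝ → ℝ}
    (hf : IntervalIntegrable f volume 0 1) :
    ∫ x in (0 : ℝ)..1 / 2, (f x + f (1 - x)) = ∫ x in (0 : ℝ)..1, f x := by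
  have h₁ : IntervalIntegrable f volume 0 (1 / 2) :=
    hf.mono_set (uIcc_subset_uIcc_left (by norm_num))
  have h₂ : IntervalIntegrable f volume (1 / 2) 1 :=
    hf.mono_set (uIcc_subset_uIcc_right (by norm_num))
  have h₂' : IntervalIntegrable (fun x => f (1 - x)) volume 0 (1 / 2) := by
    simpa [show (1 : ℝ) - 2⁻¹ = 2⁻¹ by norm_num] using (h₂.comp_sub_left 1).symm
  rw [intervalIntegral.integral_add h₁ h₂', intervalIntegral.integral_comp_sub_left,
    ← intervalIntegral.integral_add_adjacent_intervals h₁ h₂]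
  norm_num

theorem integral_Ioo_eq_integral_Ioo_comp_mul_one_sub {c : ℝ} (hc : 0 < c) (g : ℝ → ℝ) :
    ∫ x in Ioo 0 (c / 4), g x = ∫ u in Ioo 0 (1 / 2), |c - 2 * c * u| * g (c * u * (1 - u)) := by
  set ψ : ℝ → ℝ := fun u => c * u * (1 - u)
  have hψ' : ∀ u, HasDerivAt ψ (c - 2 * c * u) u := fun u =>
    (((hasDerivAt_id' u).const_mul c).mul ((hasDerivAt_id' u).const_sub 1)).congr_deriv (by ring)
  have hmono : StrictMonoOn ψ (Icc 0 (1 / 2)) := fun u hu v hv huv => by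
    have : 0 < 1 - u - v := by linarith [hv.2]
    simp only [ψ]; nlinarith [mul_pos hc (mul_pos (sub_pos.2 huv) this)]
  have himage : ψ '' Ioo 0 (1 / 2) = Ioo 0 (c / 4) := by
    have hψ : ψ 0 = 0 ∧ ψ (1 / 2) = c / 4 := by constructor <;> (simp only [ψ]; ring)
    refine (hψ.1 ▸ hψ.2 ▸ hmono.image_Ioo_subset).antisymm ?_
    simpa only [hψ] using intermediate_value_Ioo (by norm_num : (0 : ℝ) ≤ 1 / 2)
      (fun u _ => (hψ' u).continuousAt.continuousWithinAt)
  rw [← himage, integral_image_eq_integral_abs_deriv_smul measurableSet_Ioo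
    (fun u _ => (hψ' u).hasDerivWithinAt) (hmono.injOn.mono Ioo_subset_Icc_self)]
  rfl

noncomputable def raneyDensity (x : ℝ) : ℝ :=
  (9 * (1 + Real.sqrt (1 - 4 * x / 27)) ^ ((4 : ℝ) / 3) -
      (2 : ℝ) ^ ((4 : ℝ) / 3) * x ^ ((2 : ℝ) / 3)) /
    ((2 : ℝ) ^ ((5 : ℝ) / 3) * (3 : ℝ) ^ ((3 : ℝ) / 2) * π * x ^ ((1 : ℝ) / 3) *
      (1 + Real.sqrt (1 - 4 * x / 27)) ^ ((2 : ℝ) / 3))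

theorem rpow_natCast_div_three {y : ℝ} (hy : 0 ≤ y) (k : ℕ) :
    y ^ ((k : ℝ) / 3) = (y ^ ((1 : ℝ) / 3)) ^ k := by
  rw [← rpow_natCast, ← rpow_mul hy, one_div_mul_eq_div]

theorem rpow_one_third_pow_three {y : ℝ} (hy : 0 ≤ y) : (y ^ ((1 : ℝ) / 3)) ^ 3 = y := by
  rw [← rpow_natCast_div_three hy]
  norm_num

theorem raneyDensity_comp {u : ℝ} (hu₀ : 0 < u) (hu : u ≤ 1 / 2) :
    raneyDensity (27 * u * (1 - u)) =
      ((1 - u) ^ ((2 : ℝ) / 3) - u ^ ((2 : ℝ) / 3)) /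
        (2 * √3 * π * u ^ ((1 : ℝ) / 3) * (1 - u) ^ ((1 : ℝ) / 3)) := by
  have hv₀ : 0 ≤ 1 - u := by linarith
  have hsqrt : √(1 - 4 * (27 * u * (1 - u)) / 27) = 1 - 2 * u := by
    rw [show 1 - 4 * (27 * u * (1 - u)) / 27 = (1 - 2 * u) ^ 2 by ring]
    exact sqrt_sq (by linarith)
  have h₂ : (2 * (1 - u)) ^ ((1 : ℝ) / 3) = 2 ^ ((1 : ℝ) / 3) * (1 - u) ^ ((1 : ℝ) / 3) :=
    mul_rpow zero_le_two hv₀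
  have h₂₇ :
      (27 * u * (1 - u)) ^ ((1 : ℝ) / 3) = 3 * u ^ ((1 : ℝ) / 3) * (1 - u) ^ ((1 : ℝ) / 3) := by
    rw [mul_rpow (by positivity) hv₀, mul_rpow (by norm_num) hu₀.le,
      show (27 : ℝ) = 3 ^ (3 : ℝ) by norm_num, ← rpow_mul zero_le_three]
    norm_num
  have h₃ : (3 : ℝ) ^ ((3 : ℝ) / 2) = 3 * √3 := by
    rw [show (3 : ℝ) / 2 = 1 + 1 / 2 by norm_num, rpow_add three_pos, rpow_one, sqrt_eq_rpow]
  have hc := rpow_one_third_pow_three zero_le_two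
  set A := u ^ ((1 : ℝ) / 3)
  set B := (1 - u) ^ ((1 : ℝ) / 3)
  rw [raneyDensity, hsqrt, show 1 + (1 - 2 * u) = 2 * (1 - u) by ring, h₃]
  rw [show (4 : ℝ) / 3 = (4 : ℕ) / 3 by norm_num, show (2 : ℝ) / 3 = (2 : ℕ) / 3 by norm_num,
    show (5 : ℝ) / 3 = (5 : ℕ) / 3 by norm_num]
  simp only [rpow_natCast_div_three (by positivity : (0 : ℝ) ≤ 2 * (1 - u)),
    rpow_natCast_div_three (by positivity : (0 : ℝ) ≤ 27 * u * (1 - u)),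
    rpow_natCast_div_three zero_le_two, rpow_natCast_div_three hu₀.le,
    rpow_natCast_div_three hv₀, h₂, h₂₇]
  have : 0 < A := by positivity
  have : 0 < B := rpow_pos_of_pos (by linarith) _
  field_simp
  linear_combination 9 * (A ^ 2 - B ^ 2) * hc

theorem raneyDensity_nonneg {x : ℝ} (hx₀ : 0 ≤ x) (hx : x ≤ 27 / 4) : 0 ≤ raneyDensity x := by
  have hnum : (2 : ℝ) ^ ((4 : ℝ) / 3) * x ^ ((2 : ℝ) / 3) ≤ 9 :=
    calc (2 : ℝ) ^ ((4 : ℝ) / 3) * x ^ ((2 : ℝ) / 3) = (4 * x) ^ ((2 : ℝ) / 3) := by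
          rw [mul_rpow zero_le_four hx₀, show (4 : ℝ) / 3 = (2 : ℕ) * (2 / 3) by norm_num,
            rpow_natCast_mul zero_le_two]
          norm_num
      _ ≤ 27 ^ ((2 : ℝ) / 3) := rpow_le_rpow (by positivity) (by linarith) (by norm_num)
      _ = 9 := by
          rw [show (27 : ℝ) = 3 ^ (3 : ℝ) by norm_num, ← rpow_mul zero_le_three]
          norm_num
  have hs : 1 ≤ (1 + √(1 - 4 * x / 27)) ^ ((4 : ℝ) / 3) :=
    one_le_rpow (le_add_of_nonneg_right (sqrt_nonneg _)) (by norm_num)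
  exact div_nonneg (by linarith) (by positivity)

theorem abs_mul_pow_mul_raneyDensity_comp (m : ℕ) {u : ℝ} (hu₀ : 0 < u) (hu : u < 1 / 2) :
    |27 - 2 * 27 * u| * ((27 * u * (1 - u)) ^ m * raneyDensity (27 * u * (1 - u))) =
      27 ^ (m + 1) / (2 * √3 * π) *
        ((u ^ ((m : ℝ) + 2 / 3 - 1) * (1 - u) ^ ((m : ℝ) + 4 / 3) -
            u ^ ((m : ℝ) + 2 / 3) * (1 - u) ^ ((m : ℝ) + 4 / 3 - 1)) +
          ((1 - u) ^ ((m : ℝ) + 2 / 3 - 1) * (1 - (1 - u)) ^ ((m : ℝ) + 4 / 3) -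
            (1 - u) ^ ((m : ℝ) + 2 / 3) * (1 - (1 - u)) ^ ((m : ℝ) + 4 / 3 - 1))) := by
  have hv₀ : 0 < 1 - u := by linarith
  have hA := rpow_one_third_pow_three hu₀.le
  have hB := rpow_one_third_pow_three hv₀.le
  rw [raneyDensity_comp hu₀ hu.le, abs_of_pos (by linarith), sub_sub_cancel,
    show (m : ℝ) + 2 / 3 - 1 = -(1 / 3) + m by ring,
    show (m : ℝ) + 4 / 3 - 1 = 1 / 3 + m by ring, add_comm (m : ℝ) (2 / 3),
    add_comm (m : ℝ) (4 / 3), show (2 : ℝ) / 3 = (2 : ℕ) / 3 by norm_num,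
    show (4 : ℝ) / 3 = (4 : ℕ) / 3 by norm_num]
  simp only [rpow_add_natCast hu₀.ne', rpow_add_natCast hv₀.ne', rpow_neg hu₀.le,
    rpow_neg hv₀.le, rpow_natCast_div_three hu₀.le, rpow_natCast_div_three hv₀.le]
  set A := u ^ ((1 : ℝ) / 3)
  set B := (1 - u) ^ ((1 : ℝ) / 3)
  have : 0 < A := by positivity
  have : 0 < B := rpow_pos_of_pos hv₀ _
  rw [mul_pow, mul_pow, show 27 - 2 * 27 * u = 27 * (B ^ 3 - A ^ 3) by rw [hA, hB]; ring]
  field_simp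
  ring

theorem integral_pow_mul_raneyDensity (m : ℕ) :
    ∫ x in (0 : ℝ)..27 / 4, x ^ m * raneyDensity x =
      2 * (3 * m + 1)! / (m ! * (2 * m + 2)!) := by
  set f : ℝ → ℝ := fun x => x ^ ((m : ℝ) + 2 / 3 - 1) * (1 - x) ^ ((m : ℝ) + 4 / 3) -
    x ^ ((m : ℝ) + 2 / 3) * (1 - x) ^ ((m : ℝ) + 4 / 3 - 1)
  have ha : (0 : ℝ) < m + 2 / 3 := by positivity
  have hb : (0 : ℝ) < m + 4 / 3 := by positivity
  calc ∫ x in (0 : ℝ)..27 / 4, x ^ m * raneyDensity x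
      = ∫ u in Ioo (0 : ℝ) (1 / 2),
          |27 - 2 * 27 * u| * ((27 * u * (1 - u)) ^ m * raneyDensity (27 * u * (1 - u))) := by
        rw [intervalIntegral.integral_of_le (by norm_num), integral_Ioc_eq_integral_Ioo,
          integral_Ioo_eq_integral_Ioo_comp_mul_one_sub (by norm_num)]
    _ = ∫ u in Ioo (0 : ℝ) (1 / 2), 27 ^ (m + 1) / (2 * √3 * π) * (f u + f (1 - u)) :=
        setIntegral_congr_fun measurableSet_Ioo fun u hu =>
          abs_mul_pow_mul_raneyDensity_comp m hu.1 hu.2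
    _ = 27 ^ (m + 1) / (2 * √3 * π) * ∫ u in (0 : ℝ)..1, f u := by
        rw [integral_const_mul, ← integral_Ioc_eq_integral_Ioo,
          ← intervalIntegral.integral_of_le (by norm_num),
          intervalIntegral.integral_add_comp_one_sub_half
            (intervalIntegrable_rpow_mul_one_sub_rpow_sub ha hb)]
    _ = 27 ^ (m + 1) / (2 * √3 * π) *
          (2 / 3 * (Gamma (m + 2 / 3) * Gamma (m + 4 / 3)) / (2 * m + 2)!) := by
        rw [integral_rpow_mul_one_sub_rpow_sub ha hb,
          show (m : ℝ) + 2 / 3 + (m + 4 / 3) + 1 = (2 * m + 2 : ℕ) + 1 by push_cast; ring,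
          Gamma_nat_eq_factorial]
        ring
    _ = _ := by
        rw [Gamma_natCast_add_two_thirds_mul_Gamma_natCast_add_four_thirds]
        field_simp
        ring

/-- For
`W(x) = [9·(1 + √(1 − 4x/27))^(4/3) − 2^(4/3)·x^(2/3)] /
        (2^(5/3)·3^(3/2)·π·x^(1/3)·(1 + √(1 − 4x/27))^(2/3))`
on `(0, 27/4)`: `W ≥ 0` there, and
`∫₀^{27/4} x^m·W(x) dx = A_m(3,2) = 2·C(3m+2, m)/(3m+2)`. -/
theorem stmt_15 :
    (∀ x ∈ Set.Ioo (0 : ℝ) (27 / 4),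
      0 ≤ (9 * (1 + Real.sqrt (1 - 4 * x / 27)) ^ ((4 : ℝ) / 3) -
            (2 : ℝ) ^ ((4 : ℝ) / 3) * x ^ ((2 : ℝ) / 3)) /
          ((2 : ℝ) ^ ((5 : ℝ) / 3) * (3 : ℝ) ^ ((3 : ℝ) / 2) * π * x ^ ((1 : ℝ) / 3) *
            (1 + Real.sqrt (1 - 4 * x / 27)) ^ ((2 : ℝ) / 3))) ∧
    ∀ m : ℕ,
      (∫ x in (0:ℝ)..(27 / 4),
        x ^ m * ((9 * (1 + Real.sqrt (1 - 4 * x / 27)) ^ ((4 : ℝ) / 3) -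
            (2 : ℝ) ^ ((4 : ℝ) / 3) * x ^ ((2 : ℝ) / 3)) /
          ((2 : ℝ) ^ ((5 : ℝ) / 3) * (3 : ℝ) ^ ((3 : ℝ) / 2) * π * x ^ ((1 : ℝ) / 3) *
            (1 + Real.sqrt (1 - 4 * x / 27)) ^ ((2 : ℝ) / 3))))
      = raney 3 2 m ∧
      raney 3 2 m = 2 * (Nat.choose (3 * m + 2) m : ℝ) / (3 * (m : ℝ) + 2) := by
  refine ⟨fun x hx => raneyDensity_nonneg hx.1.le hx.2.le, fun m => ⟨?_, ?_⟩⟩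
  · rw [raney_three_two]
    exact integral_pow_mul_raneyDensity m
  · rw [raney_three_two, two_mul_factorial_div_eq_choose]
end

section
/- For every natural number m, the Raney numbers satisfy 4^m · A_m(2, 1/2) = A_{2m}(2, 1); explicitly, 4^m · (1/2)·Γ(2m + 1/2) / (m!·Γ(m + 3/2)) = binom(4m+1, 2m) / (4m+1). -/
/-!
For `1 ≤ p` and `0 < r` the product defining `A_m(p, r)` is a rising factorial, so
`A_m(p, r) = r Γ(mp + r) / (m! Γ(m(p - 1) + r + 1))`. For `(p, r) = (2, 1)` these Gamma values are
factorials and give the Fuss–Catalan numbers `binom(mp + 1, m) / (mp + 1)`. For `(p, r) = (2, 1/2)`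
they sit at half-integers, where Legendre's duplication formula gives
`Γ(n + 1/2) = (2n)! √π / (4^n n!)`, and the factors `√π` and the powers of `4` cancel.
-/

open Real

open Finset Nat

theorem Real.Gamma_add_nat_eq_prod_mul_Gamma {x : ℝ} {n : ℕ} (hx : ∀ j < n, x + j ≠ 0) :
    Gamma (x + n) = (∏ j ∈ range n, (x + j)) * Gamma x := by
  induction n with
  | zero => simp
  | succ n ih =>
    rw [Nat.cast_succ, ← add_assoc, Gamma_add_one (hx n n.lt_succ_self), prod_range_succ,
      ih fun j hj => hx j (hj.trans n.lt_succ_self)]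
    ring

theorem prod_Icc_sub_eq_prod_range_add (x : ℝ) (m : ℕ) :
    ∏ i ∈ Icc 1 m, (x + m - i) = ∏ j ∈ range m, (x + j) := by
  rw [← prod_range_reflect]
  refine prod_nbij' (· - 1) (· + 1) ?_ ?_ ?_ ?_ ?_ <;> simp +contextual
  · omega
  · intro i hi him
    rw [Nat.sub_sub, Nat.add_sub_cancel' hi, Nat.cast_sub him]
    ring

theorem raney_eq_Gamma {p r : ℝ} (hp : 1 ≤ p) (hr : 0 < r) (m : ℕ) :
    raney p r m = r * Gamma (m * p + r) / (m ! * Gamma (m * (p - 1) + r + 1)) := by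
  cases m with
  | zero => simp [raney, Gamma_add_one hr.ne', hr.ne', (Gamma_pos_of_pos hr).ne']
  | succ m =>
    have hx : 0 < (m + 1) * (p - 1) + r + 1 := by
      have : 0 ≤ ((m : ℝ) + 1) * (p - 1) := mul_nonneg (by positivity) (by linarith)
      linarith
    have hprod : ∏ i ∈ Icc 1 m, ((m + 1) * p + r - i) =
        Gamma ((m + 1) * p + r) / Gamma ((m + 1) * (p - 1) + r + 1) := by
      have hm : (m + 1) * p + r = (m + 1) * (p - 1) + r + 1 + m := by ring
      rw [eq_div_iff (Gamma_pos_of_pos hx).ne', hm, prod_Icc_sub_eq_prod_range_add,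
        Gamma_add_nat_eq_prod_mul_Gamma fun j _ => (add_pos_of_pos_of_nonneg hx j.cast_nonneg).ne']
    rw [raney, hprod]
    push_cast
    ring

theorem Real.Gamma_nat_add_half_eq_factorial_div (n : ℕ) :
    Gamma (n + 1 / 2) = (2 * n)! * √π / (4 ^ n * n !) := by
  have h := Gamma_mul_Gamma_add_half (n + 1 / 2)
  set G := Gamma (n + 1 / 2)
  rw [add_assoc, add_halves, Gamma_nat_eq_factorial,
    show 2 * ((n : ℝ) + 1 / 2) = (2 * n : ℕ) + 1 by push_cast; ring, Gamma_nat_eq_factorial,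
    show 1 - ((2 * n : ℕ) + 1 : ℝ) = -(2 * n : ℕ) by ring, rpow_neg zero_le_two, rpow_natCast,
    pow_mul] at h
  norm_num at h
  field_simp at h ⊢
  linear_combination h

theorem raney_natCast_one_eq_choose_div {p : ℕ} (hp : 1 ≤ p) (n : ℕ) :
    raney p 1 n = (n * p + 1).choose n / (n * p + 1 : ℝ) := by
  obtain ⟨q, rfl⟩ := Nat.exists_eq_add_of_le' hp
  have hchoose : (n * (q + 1) + 1).choose n * n ! * (n * q + 1)! =
      (n * (q + 1) + 1) * (n * (q + 1))! := by
    rw [← factorial_succ, show n * (q + 1) + 1 = n * q + 1 + n by ring, mul_right_comm]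
    exact add_choose_mul_factorial_mul_factorial _ _
  rw [raney_eq_Gamma (by simp) one_pos,
    show (n : ℝ) * (q + 1 : ℕ) + 1 = (n * (q + 1) : ℕ) + 1 by push_cast; ring,
    show (n : ℝ) * ((q + 1 : ℕ) - 1) + 1 + 1 = (n * q + 1 : ℕ) + 1 by push_cast; ring,
    Gamma_nat_eq_factorial, Gamma_nat_eq_factorial]
  field_simp
  norm_cast
  rw [mul_comm, ← hchoose]
  ring

theorem four_pow_mul_raney_two_half (m : ℕ) :
    4 ^ m * raney 2 (1 / 2) m = raney 2 1 (2 * m) := by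
  rw [raney_eq_Gamma (by norm_num) (by norm_num), raney_eq_Gamma (by norm_num) one_pos,
    show (m : ℝ) * 2 + 1 / 2 = (2 * m : ℕ) + 1 / 2 by push_cast; ring,
    show (m : ℝ) * (2 - 1) + 1 / 2 + 1 = (m + 1 : ℕ) + 1 / 2 by push_cast; ring,
    show ((2 * m : ℕ) : ℝ) * 2 + 1 = (4 * m : ℕ) + 1 by push_cast; ring,
    show ((2 * m : ℕ) : ℝ) * (2 - 1) + 1 + 1 = (2 * m + 1 : ℕ) + 1 by push_cast; ring,
    Gamma_nat_add_half_eq_factorial_div, Gamma_nat_add_half_eq_factorial_div,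
    Gamma_nat_eq_factorial, Gamma_nat_eq_factorial,
    show 2 * (m + 1) = 2 * m + 1 + 1 by ring, factorial_succ (2 * m + 1), factorial_succ m,
    show 2 * (2 * m) = 4 * m by ring]
  field_simp
  push_cast
  ring

/-- For every natural `m`, `4^m·A_m(2,1/2) = A_{2m}(2,1)`; explicitly,
`4^m·(1/2)·Γ(2m + 1/2)/(m!·Γ(m + 3/2)) = C(4m+1, 2m)/(4m+1)`. -/
theorem stmt_17 (m : ℕ) :
    (4 : ℝ) ^ m * raney 2 (1 / 2) m = raney 2 1 (2 * m) ∧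
    (4 : ℝ) ^ m *
        ((1 / 2) * Gamma (2 * (m : ℝ) + 1 / 2) /
          ((Nat.factorial m : ℝ) * Gamma ((m : ℝ) + 3 / 2)))
      = (Nat.choose (4 * m + 1) (2 * m) : ℝ) / (4 * (m : ℝ) + 1) := by
  have hhalf : raney 2 (1 / 2) m =
      1 / 2 * Gamma (2 * m + 1 / 2) / (m ! * Gamma (m + 3 / 2)) := by
    rw [raney_eq_Gamma (by norm_num) (by norm_num)]
    ring_nf
  have hcatalan : raney 2 1 (2 * m) = (4 * m + 1).choose (2 * m) / (4 * m + 1 : ℝ) := by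
    have h := raney_natCast_one_eq_choose_div (p := 2) (by norm_num) (2 * m)
    push_cast at h
    rw [h]
    ring_nf
  refine ⟨four_pow_mul_raney_two_half m, ?_⟩
  rw [← hhalf, four_pow_mul_raney_two_half, hcatalan]
end
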